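/- (Non-identifiability under natural multiplicities.) If the multiplicities satisfy Σ_{j=1}^k λ_j = n, then the log-likelihood is invariant under rescaling of the weight vector: l(c·w, θ, σ²) = l(w, θ, σ²) for every c > 0, every w ∈ (0,∞)^k, θ ∈ ℝ and σ² ≥ 0. Consequently l has no unique maximizer in w in this case. -/

import Mathlib

open MeasureTheory Real Set Filter Topology

/-- Standard normal density. -/
noncomputable def stdPhi (z : ℝ) : ℝ := (Real.sqrt (2 * Real.pi))⁻¹ * Real.exp (-z ^ 2 / 2)

/-- `η_i = √(u_i² + σ²)`. -/
noncomputable def etaFn (u sigma2 : ℝ) : ℝ := Real.sqrt (u ^ 2 + sigma2)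

/-- The cell probability `H`: Gaussian `N(θ, η²)` integral over the annulus
`{y : b ≤ |y| < b'}`, with (possibly infinite) extended-real thresholds. -/
noncomputable def cellH (b b' : EReal) (u θ sigma2 : ℝ) : ℝ :=
  ∫ x in {x : ℝ | b ≤ ((|x| : ℝ) : EReal) ∧ ((|x| : ℝ) : EReal) < b'},
    (etaFn u sigma2)⁻¹ * stdPhi ((x - θ) / etaFn u sigma2)

/-- The log-likelihood `l(w, θ, σ²)` of Dear–Begg selection models. For study `i`
the thresholds on the outcome scale are `b i 0 = 0 ≤ b i 1 ≤ … ≤ b i k = ∞`. -/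
noncomputable def loglik {n k : ℕ} (y u : Fin n → ℝ) (lam : Fin k → ℝ)
    (b : Fin n → ℕ → EReal) (w : Fin k → ℝ) (θ sigma2 : ℝ) : ℝ :=
  -((n : ℝ) / 2) * Real.log (2 * Real.pi)
    + ∑ j, lam j * Real.log (w j)
    - ∑ i, Real.log (etaFn (u i) sigma2)
    - (1 / 2) * ∑ i, ((y i - θ) / etaFn (u i) sigma2) ^ 2
    - ∑ i, Real.log (∑ j : Fin k, w j * cellH (b i (j : ℕ)) (b i ((j : ℕ) + 1)) (u i) θ sigma2)

/-!
Scaling the weights by `c` adds `(∑ j, λ j) * log c` to the weight term of the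
log-likelihood and, since every normaliser `A i` is linear in `w`, subtracts `n * log c`
through the terms `log (A i)`; the two cancel when `∑ j, λ j = n`. The only analytic input
is `A i ≠ 0`, which holds because the last cell `[b i (k - 1), ∞)` carries positive
Gaussian mass.
-/

open ProbabilityTheory

lemma etaFn_sq {u sigma2 : ℝ} (h : 0 ≤ u ^ 2 + sigma2) : etaFn u sigma2 ^ 2 = u ^ 2 + sigma2 :=
  Real.sq_sqrt h

lemma etaFn_inv_mul_stdPhi (u θ sigma2 x : ℝ) :
    (etaFn u sigma2)⁻¹ * stdPhi ((x - θ) / etaFn u sigma2)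
      = gaussianPDFReal θ (u ^ 2 + sigma2).toNNReal x := by
  rcases le_or_gt (u ^ 2 + sigma2) 0 with h | h
  · have hη : etaFn u sigma2 = 0 := Real.sqrt_eq_zero'.2 h
    simp [hη, gaussianPDFReal, Real.toNNReal_of_nonpos h]
  · have hη : 0 < etaFn u sigma2 := Real.sqrt_pos.2 h
    rw [gaussianPDFReal, Real.coe_toNNReal _ h.le, ← etaFn_sq h.le, stdPhi,
      Real.sqrt_mul (by positivity : (0 : ℝ) ≤ 2 * π), Real.sqrt_sq hη.le, div_pow]
    field_simp

lemma cellH_eq_setIntegral_gaussianPDFReal (b b' : EReal) (u θ sigma2 : ℝ) :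
    cellH b b' u θ sigma2 =
      ∫ x in {x : ℝ | b ≤ ((|x| : ℝ) : EReal) ∧ ((|x| : ℝ) : EReal) < b'},
        gaussianPDFReal θ (u ^ 2 + sigma2).toNNReal x := by
  simp only [cellH, etaFn_inv_mul_stdPhi]

lemma cellH_nonneg (b b' : EReal) (u θ sigma2 : ℝ) : 0 ≤ cellH b b' u θ sigma2 := by
  rw [cellH_eq_setIntegral_gaussianPDFReal]
  exact setIntegral_nonneg_of_ae_restrict (.of_forall fun x => gaussianPDFReal_nonneg _ _ x)

lemma cellH_top_pos {b : EReal} (hb : b ≠ ⊤) {u sigma2 : ℝ} (h : 0 < u ^ 2 + sigma2)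
    (θ : ℝ) :
    0 < cellH b ⊤ u θ sigma2 := by
  have hv : (u ^ 2 + sigma2).toNNReal ≠ 0 := by simpa using h
  rw [cellH_eq_setIntegral_gaussianPDFReal, setIntegral_pos_iff_support_of_nonneg_ae
    (.of_forall fun x => gaussianPDFReal_nonneg _ _ x)
    (integrable_gaussianPDFReal _ _).integrableOn]
  have hIci : Ici b.toReal ⊆
      Function.support (gaussianPDFReal θ (u ^ 2 + sigma2).toNNReal) ∩
      {x : ℝ | b ≤ ((|x| : ℝ) : EReal) ∧ ((|x| : ℝ) : EReal) < ⊤} := fun x hx =>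
    ⟨(gaussianPDFReal_pos _ _ x hv).ne',
      (EReal.le_coe_toReal hb).trans (EReal.coe_le_coe_iff.2 (le_trans hx (le_abs_self x))),
      EReal.coe_lt_top _⟩
  exact (by simp : (0 : ENNReal) < volume (Ici b.toReal)).trans_le (measure_mono hIci)

lemma sum_mul_cellH_pos {k : ℕ} (hk : 1 ≤ k) {b : ℕ → EReal} (hbk : b k = ⊤)
    (hblt : b (k - 1) ≠ ⊤)
    {w : Fin k → ℝ} (hw : ∀ j, 0 < w j) {u sigma2 : ℝ} (h : 0 < u ^ 2 + sigma2) (θ : ℝ) :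
    0 < ∑ j : Fin k, w j * cellH (b j) (b (j + 1)) u θ sigma2 := by
  let last : Fin k := ⟨k - 1, by omega⟩
  have hlast : 0 < cellH (b last) (b (last + 1)) u θ sigma2 := by
    rw [show (last : ℕ) + 1 = k by simp [last]; omega, hbk]
    exact cellH_top_pos hblt h θ
  exact Finset.sum_pos' (fun j _ => mul_nonneg (hw j).le (cellH_nonneg _ _ _ _ _))
    ⟨last, Finset.mem_univ _, mul_pos (hw last) hlast⟩

lemma loglik_mul_weights {n k : ℕ} (y u : Fin n → ℝ) (lam : Fin k → ℝ)
    (b : Fin n → ℕ → EReal)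
    {c : ℝ} (hc : c ≠ 0) {w : Fin k → ℝ} (hw : ∀ j, w j ≠ 0) {θ sigma2 : ℝ}
    (hA : ∀ i, ∑ j : Fin k, w j * cellH (b i j) (b i (j + 1)) (u i) θ sigma2 ≠ 0) :
    loglik y u lam b (fun j => c * w j) θ sigma2
      = loglik y u lam b w θ sigma2 + ((∑ j, lam j) - n) * Real.log c := by
  have hlam : ∑ j, lam j * Real.log (c * w j)
      = (∑ j, lam j) * Real.log c + ∑ j, lam j * Real.log (w j) := by
    simp only [Real.log_mul hc (hw _), mul_add, Finset.sum_add_distrib, Finset.sum_mul]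
  have hA_mul :
      ∑ i, Real.log (∑ j : Fin k, c * w j * cellH (b i j) (b i (j + 1)) (u i) θ sigma2)
        = n * Real.log c +
          ∑ i, Real.log (∑ j : Fin k, w j * cellH (b i j) (b i (j + 1)) (u i) θ sigma2) := by
    simp only [mul_assoc, ← Finset.mul_sum, Real.log_mul hc (hA _), Finset.sum_add_distrib,
      Finset.sum_const, Finset.card_univ, Fintype.card_fin, nsmul_eq_mul]
  rw [loglik, loglik, hlam, hA_mul]
  ring

theorem loglik_nonidentifiable_of_sum_lam_eq_n_general
    {n k : ℕ} (hk : 1 ≤ k)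
    (y u : Fin n → ℝ) (hu : ∀ i, 0 < u i)
    (lam : Fin k → ℝ)
    (hsum : (∑ j, lam j) = (n : ℝ))
    (b : Fin n → ℕ → EReal)
    (hbk : ∀ i, b i k = ⊤)
    (hblt : ∀ i, ∀ j, j < k → b i j ≠ ⊤) :
    (∀ (c : ℝ), 0 < c → ∀ (w : Fin k → ℝ), (∀ j, 0 < w j) →
      ∀ (θ sigma2 : ℝ), 0 ≤ sigma2 →
        loglik y u lam b (fun j => c * w j) θ sigma2 = loglik y u lam b w θ sigma2) ∧
    (∀ (w : Fin k → ℝ), (∀ j, 0 < w j) → ∀ (θ sigma2 : ℝ), 0 ≤ sigma2 →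
      ∃ w' : Fin k → ℝ, w' ≠ w ∧ (∀ j, 0 < w' j) ∧
        loglik y u lam b w' θ sigma2 = loglik y u lam b w θ sigma2) := by
  have scale_invariant : ∀ (c : ℝ), 0 < c → ∀ (w : Fin k → ℝ), (∀ j, 0 < w j) →
      ∀ (θ sigma2 : ℝ), 0 ≤ sigma2 →
        loglik y u lam b (fun j => c * w j) θ sigma2 = loglik y u lam b w θ sigma2 := by
    intro c hc w hw θ sigma2 hs
    have hA i := sum_mul_cellH_pos hk (hbk i) (hblt i (k - 1) (by omega)) hw
      (by nlinarith [hu i] : 0 < u i ^ 2 + sigma2) θ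
    rw [loglik_mul_weights y u lam b hc.ne' (fun j => (hw j).ne') (fun i => (hA i).ne'), hsum,
      sub_self, zero_mul, add_zero]
  refine ⟨scale_invariant, fun w hw θ sigma2 hs => ⟨fun j => 2 * w j, ?_,
    fun j => mul_pos two_pos (hw j), scale_invariant 2 two_pos w hw θ sigma2 hs⟩⟩
  intro h
  have := congrFun h ⟨0, hk⟩
  linarith [hw ⟨0, hk⟩]

/-- non-identifiability under natural multiplicities: if
`Σ_j λ_j = n` then the log-likelihood is invariant under rescaling of the weight
vector, and consequently no point of the domain is the unique maximizer in `w`: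
every `(w, θ, σ²)` has a distinct weight vector with the same likelihood value. -/
theorem loglik_nonidentifiable_of_sum_lam_eq_n
    {n k : ℕ} (hn : 1 ≤ n) (hk : 1 ≤ k)
    (y u : Fin n → ℝ) (hu : ∀ i, 0 < u i)
    (lam : Fin k → ℝ) (hlam : ∀ j, 0 < lam j)
    (hsum : (∑ j, lam j) = (n : ℝ))
    (b : Fin n → ℕ → EReal)
    (hb0 : ∀ i, b i 0 = 0) (hbk : ∀ i, b i k = ⊤)
    (hbmono : ∀ i, Monotone (b i))
    (hblt : ∀ i, ∀ j, j < k → b i j ≠ ⊤) :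
    (∀ (c : ℝ), 0 < c → ∀ (w : Fin k → ℝ), (∀ j, 0 < w j) →
      ∀ (θ sigma2 : ℝ), 0 ≤ sigma2 →
        loglik y u lam b (fun j => c * w j) θ sigma2 = loglik y u lam b w θ sigma2) ∧
    (∀ (w : Fin k → ℝ), (∀ j, 0 < w j) → ∀ (θ sigma2 : ℝ), 0 ≤ sigma2 →
      ∃ w' : Fin k → ℝ, w' ≠ w ∧ (∀ j, 0 < w' j) ∧
        loglik y u lam b w' θ sigma2 = loglik y u lam b w θ sigma2) :=
  loglik_nonidentifiable_of_sum_lam_eq_n_general hk y u hu lam hsum b hbk hblt
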